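/- arXiv:2203.07577 — 2 statements merged into one kernel-verified Lean document; each statement's English description precedes it below -/
import Mathlib

section
/- Fix T > 0 and define R(t,g) as above. For each fixed t < T, the function g ↦ R(t,g) is concave on ℝ. -/
noncomputable def erfc (z : ℝ) : ℝ :=
  1 - (2 / Real.sqrt Real.pi) * ∫ x in (0:ℝ)..z, Real.exp (-x ^ 2)

noncomputable def Q (T t g : ℝ) : ℝ :=
  (1 / 2) * erfc (g / Real.sqrt (2 * (T - t)))

noncomputable def R (T t g : ℝ) : ℝ :=
  (g / 2) * erfc (g / Real.sqrt (2 * (T - t)))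
    - Real.sqrt ((T - t) / (2 * Real.pi)) * Real.exp (-g ^ 2 / (2 * (T - t)))
    + Real.sqrt (T / (2 * Real.pi))

lemma hasDerivAt_erfc (z : ℝ) :
    HasDerivAt erfc (-(2 / Real.sqrt Real.pi * Real.exp (-z ^ 2))) z := by
  have hc : Continuous fun x : ℝ => Real.exp (-x ^ 2) := by continuity
  have hint : HasDerivAt (fun z => ∫ x in (0:ℝ)..z, Real.exp (-x ^ 2))
      (Real.exp (-z ^ 2)) z :=
    (intervalIntegral.integral_hasStrictDerivAt_right
      (hc.intervalIntegrable 0 z)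
      (hc.stronglyMeasurableAtFilter _ _) hc.continuousAt).hasDerivAt
  have := (hint.const_mul (2 / Real.sqrt Real.pi)).const_sub 1
  exact this

lemma hasDerivAt_R (T t : ℝ) (htT : t < T) (g : ℝ) :
    HasDerivAt (fun g => R T t g) (Q T t g) g := by
  set τ := T - t with hτdef
  have hτ : 0 < τ := by simp [hτdef]; linarith
  set s := Real.sqrt (2 * τ) with hs
  have hs0 : 0 < s := Real.sqrt_pos.mpr (by linarith)
  have hssq : s ^ 2 = 2 * τ := Real.sq_sqrt (by linarith)
  -- derivative of g ↦ g / s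
  have h1 : HasDerivAt (fun g : ℝ => g / s) (1 / s) g := by
    simpa using (hasDerivAt_id g).div_const s
  -- derivative of g ↦ erfc (g / s)
  have h2 : HasDerivAt (fun g : ℝ => erfc (g / s))
      (-(2 / Real.sqrt Real.pi * Real.exp (-(g / s) ^ 2)) * (1 / s)) g :=
    HasDerivAt.comp (h₂ := erfc) (h := fun g : ℝ => g / s) g (hasDerivAt_erfc (g / s)) h1
  -- derivative of g ↦ (g/2) * erfc (g/s)
  have h3 : HasDerivAt (fun g : ℝ => (g / 2) * erfc (g / s))
      ((1 / 2) * erfc (g / s)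
        + (g / 2) * (-(2 / Real.sqrt Real.pi * Real.exp (-(g / s) ^ 2)) * (1 / s))) g := by
    have hg2 : HasDerivAt (fun g : ℝ => g / 2) (1 / 2) g := by
      simpa using (hasDerivAt_id g).div_const 2
    exact hg2.mul h2
  -- derivative of g ↦ exp (-g^2 / (2τ))
  have h4 : HasDerivAt (fun g : ℝ => Real.exp (-g ^ 2 / (2 * τ)))
      (Real.exp (-g ^ 2 / (2 * τ)) * (-(2 * g) / (2 * τ))) g := by
    have hpow : HasDerivAt (fun g : ℝ => -g ^ 2 / (2 * τ)) (-(2 * g) / (2 * τ)) g := by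
      have := ((hasDerivAt_pow 2 g).neg).div_const (2 * τ)
      simpa using this
    simpa using hpow.exp
  have h5 : HasDerivAt (fun g => R T t g)
      ((1 / 2) * erfc (g / s)
        + (g / 2) * (-(2 / Real.sqrt Real.pi * Real.exp (-(g / s) ^ 2)) * (1 / s))
        - Real.sqrt (τ / (2 * Real.pi))
            * (Real.exp (-g ^ 2 / (2 * τ)) * (-(2 * g) / (2 * τ)))) g := by
    simpa [R, hs, hτdef] using (h3.sub (h4.const_mul (Real.sqrt (τ / (2 * Real.pi))))).add_const
      (Real.sqrt (T / (2 * Real.pi)))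
  convert h5 using 1
  -- Now the algebra: cancel the middle terms
  have hub : (g / s) ^ 2 = g ^ 2 / (2 * τ) := by
    rw [div_pow, hssq]
  have hexp : Real.exp (-(g / s) ^ 2) = Real.exp (-g ^ 2 / (2 * τ)) := by
    rw [hub]; ring_nf
  rw [Q, hexp]
  have hπ : 0 < Real.pi := Real.pi_pos
  have hsτ : Real.sqrt τ > 0 := Real.sqrt_pos.mpr hτ
  have hsπ : Real.sqrt Real.pi > 0 := Real.sqrt_pos.mpr hπ
  have hs2 : Real.sqrt 2 > 0 := by positivity
  have e1 : s = Real.sqrt 2 * Real.sqrt τ := by rw [hs, Real.sqrt_mul (by norm_num)]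
  have e2 : Real.sqrt (τ / (2 * Real.pi))
      = Real.sqrt τ / (Real.sqrt 2 * Real.sqrt Real.pi) := by
    rw [Real.sqrt_div hτ.le, Real.sqrt_mul (by norm_num)]
  have hττ : Real.sqrt τ * Real.sqrt τ = τ := Real.mul_self_sqrt hτ.le
  rw [e1, e2]
  have hs' : Real.sqrt (2 * τ) = Real.sqrt 2 * Real.sqrt τ := e1
  field_simp
  ring_nf
  rw [Real.sq_sqrt (by linarith : (0:ℝ) ≤ T - t)]
  have e3 : Real.sqrt (T * 2 - t * 2) = Real.sqrt 2 * Real.sqrt τ := by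
    rw [← hs', hτdef]; ring_nf
  rw [e3, mul_inv, ← mul_assoc, hτdef]
  ring

theorem R_concave (T : ℝ) (hT : 0 < T) (t : ℝ) (htT : t < T) :
    ConcaveOn ℝ Set.univ (fun g => R T t g) := by
  have hτ : 0 < T - t := by linarith
  have hder := hasDerivAt_R T t htT
  apply AntitoneOn.concaveOn_of_deriv convex_univ
  · exact fun g _ => ((hder g).differentiableAt).continuousAt.continuousWithinAt
  · exact fun g _ => ((hder g).differentiableAt).differentiableWithinAt
  · intro a _ b _ hab
    rw [(hder a).deriv, (hder b).deriv]
    -- Q is antitone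
    have hs0 : 0 < Real.sqrt (2 * (T - t)) := Real.sqrt_pos.mpr (by linarith)
    have hdiv : a / Real.sqrt (2 * (T - t)) ≤ b / Real.sqrt (2 * (T - t)) :=
      (div_le_div_iff_of_pos_right hs0).mpr hab
    set u := a / Real.sqrt (2 * (T - t))
    set v := b / Real.sqrt (2 * (T - t))
    have hc : Continuous fun x : ℝ => Real.exp (-x ^ 2) := by continuity
    have hmono : (∫ x in (0:ℝ)..u, Real.exp (-x ^ 2))
        ≤ ∫ x in (0:ℝ)..v, Real.exp (-x ^ 2) := by
      have hadd : (∫ x in (0:ℝ)..u, Real.exp (-x ^ 2))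
          + (∫ x in u..v, Real.exp (-x ^ 2))
          = ∫ x in (0:ℝ)..v, Real.exp (-x ^ 2) :=
        intervalIntegral.integral_add_adjacent_intervals
          (hc.intervalIntegrable 0 u) (hc.intervalIntegrable u v)
      have hpos : 0 ≤ ∫ x in u..v, Real.exp (-x ^ 2) :=
        intervalIntegral.integral_nonneg hdiv (fun x _ => (Real.exp_pos _).le)
      linarith
    have h2π : (0:ℝ) ≤ 2 / Real.sqrt Real.pi := by positivity
    simp only [Q, erfc]
    have := mul_le_mul_of_nonneg_left hmono h2π
    linarith
end

section
/- For every natural number n ≥ 1, (2^{2n}/√(πn))·(1 − 2/(15n)) ≤ binomial(2n, n) ≤ 2^{2n}/√(πn). -/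
open Real Filter Nat Stirling Topology

noncomputable def B (n : ℕ) : ℝ := (Nat.centralBinom n : ℝ) * Real.sqrt n / 4 ^ n

lemma B_eq (n : ℕ) (hn : n ≠ 0) :
    B n = stirlingSeq (2 * n) / (stirlingSeq n) ^ 2 := by
  have hn0 : (0:ℝ) < (n:ℝ) := by exact_mod_cast Nat.pos_of_ne_zero hn
  have hfac : ((2 * n)! : ℝ) = (Nat.centralBinom n : ℝ) * n ! * n ! := by
    rw [Nat.centralBinom]
    have := Nat.choose_mul_factorial_mul_factorial (Nat.le_mul_of_pos_left n two_pos)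
    rw [show 2 * n - n = n by omega] at this
    exact_mod_cast this.symm
  set P : ℝ := ((n:ℝ) / Real.exp 1) ^ n with hP
  have hPpos : 0 < P := by positivity
  have hfn : (0:ℝ) < (n ! : ℝ) := by exact_mod_cast Nat.factorial_pos n
  have hsq : Real.sqrt (2 * (2*n:ℕ) : ℝ) = 2 * Real.sqrt n := by
    push_cast
    rw [show (2:ℝ) * (2 * n) = 2^2 * n by ring, Real.sqrt_mul (by positivity),
      Real.sqrt_sq (by norm_num)]
  have hpow : (((2*n:ℕ):ℝ) / Real.exp 1) ^ (2*n) = 4 ^ n * P ^ 2 := by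
    push_cast
    rw [show (2:ℝ) * n / Real.exp 1 = 2 * ((n:ℝ)/Real.exp 1) by ring, mul_pow, hP,
      show 2 * n = n * 2 by ring, pow_mul, pow_mul]
    rw [← pow_mul, show n*2 = 2*n by ring, pow_mul]
    norm_num
  have hs2 : stirlingSeq (2*n) = (Nat.centralBinom n : ℝ) * n ! * n ! / (2 * Real.sqrt n * (4 ^ n * P ^ 2)) := by
    rw [stirlingSeq, hfac, hsq, hpow]
  have hsn : (stirlingSeq n) ^ 2 = (n ! : ℝ)^2 / ((2 * n) * P ^ 2) := by
    rw [stirlingSeq, div_pow, mul_pow, Real.sq_sqrt (by positivity)]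
  rw [B, hs2, hsn]
  have hsn0 : (0:ℝ) < Real.sqrt n := Real.sqrt_pos.mpr hn0
  have h : Real.sqrt n * Real.sqrt n = (n:ℝ) := Real.mul_self_sqrt hn0.le
  field_simp
  ring_nf
  rw [Real.sq_sqrt hn0.le]

lemma B_tendsto : Tendsto B atTop (𝓝 ((Real.sqrt Real.pi)⁻¹)) := by
  have h2 : Tendsto (fun n => stirlingSeq (2*n)) atTop (𝓝 (Real.sqrt Real.pi)) :=
    tendsto_stirlingSeq_sqrt_pi.comp (tendsto_atTop_mono (fun n => by simpa using Nat.le_mul_of_pos_left n two_pos) tendsto_id)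
  have hpi : (0:ℝ) < Real.sqrt Real.pi := Real.sqrt_pos.mpr Real.pi_pos
  have h := h2.div (tendsto_stirlingSeq_sqrt_pi.pow 2) (by positivity)
  have heq : Real.sqrt Real.pi / (Real.sqrt Real.pi)^2 = (Real.sqrt Real.pi)⁻¹ := by
    rw [sq]; field_simp
  rw [heq] at h
  apply h.congr'
  filter_upwards [eventually_ge_atTop 1] with n hn
  exact (B_eq n (by omega)).symm

lemma key1 (n : ℕ) : 2*((n:ℝ)+1) * Real.sqrt n ≤ (2*(n:ℝ)+1) * Real.sqrt ((n:ℝ)+1) := by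
  have h0 : (0:ℝ) ≤ n := n.cast_nonneg
  have hsq := Real.sqrt_le_sqrt (show (2*((n:ℝ)+1))^2*n ≤ (2*(n:ℝ)+1)^2*((n:ℝ)+1) by nlinarith)
  calc 2*((n:ℝ)+1)*Real.sqrt n = Real.sqrt ((2*((n:ℝ)+1))^2 * n) := by
        rw [Real.sqrt_mul (by positivity), Real.sqrt_sq (by positivity)]
    _ ≤ Real.sqrt ((2*(n:ℝ)+1)^2*((n:ℝ)+1)) := hsq
    _ = (2*(n:ℝ)+1) * Real.sqrt ((n:ℝ)+1) := by
        rw [Real.sqrt_mul (by positivity), Real.sqrt_sq (by positivity)]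

lemma B_mono : Monotone B := by
  apply monotone_nat_of_le_succ
  intro n
  have hcR : ((n:ℝ)+1) * (Nat.centralBinom (n+1) : ℝ) = 2*(2*(n:ℝ)+1) * Nat.centralBinom n := by
    exact_mod_cast Nat.succ_mul_centralBinom_succ n
  have hcb : (0:ℝ) ≤ Nat.centralBinom n := Nat.cast_nonneg _
  rw [B, B, div_le_div_iff₀ (by positivity) (by positivity), pow_succ]
  push_cast
  have h := mul_le_mul_of_nonneg_right (key1 n)
    (show (0:ℝ) ≤ (Nat.centralBinom n:ℝ) * 4^n * 2 by positivity)
  nlinarith [h, mul_le_mul_of_nonneg_right hcR.le (mul_nonneg (Real.sqrt_nonneg ((n:ℝ)+1)) (by positivity : (0:ℝ) ≤ (4:ℝ)^n)), mul_le_mul_of_nonneg_right hcR.ge (mul_nonneg (Real.sqrt_nonneg ((n:ℝ)+1)) (by positivity : (0:ℝ) ≤ (4:ℝ)^n))]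

noncomputable def C (n : ℕ) : ℝ := B n / (1 - 2 / (15 * n))

lemma C_tendsto : Tendsto C atTop (𝓝 ((Real.sqrt Real.pi)⁻¹)) := by
  have hd : Tendsto (fun n : ℕ => 1 - 2 / (15 * (n:ℝ))) atTop (𝓝 1) := by
    have h0 : Tendsto (fun n : ℕ => 2 / (15 * (n:ℝ))) atTop (𝓝 0) := by
      apply Tendsto.div_atTop tendsto_const_nhds
      exact (tendsto_natCast_atTop_atTop).const_mul_atTop (by norm_num)
    simpa using tendsto_const_nhds.sub h0
  have h := B_tendsto.div hd (by norm_num)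
  rw [div_one] at h
  exact h

lemma key2 (n : ℕ) (hn : 1 ≤ n) :
    (2*(n:ℝ)+1) * Real.sqrt ((n:ℝ)+1) * (15*(n:ℝ)-2) ≤ 2*(n:ℝ)*(15*(n:ℝ)+13) * Real.sqrt n := by
  have h1 : (1:ℝ) ≤ n := by exact_mod_cast hn
  have hA : (0:ℝ) ≤ (2*(n:ℝ)+1) * (15*(n:ℝ)-2) := by nlinarith
  have hB : (0:ℝ) ≤ 2*(n:ℝ)*(15*(n:ℝ)+13) := by nlinarith
  have hsq := Real.sqrt_le_sqrt
    (show ((2*(n:ℝ)+1)*(15*(n:ℝ)-2))^2*((n:ℝ)+1) ≤ (2*(n:ℝ)*(15*(n:ℝ)+13))^2*(n:ℝ) by nlinarith)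
  calc (2*(n:ℝ)+1) * Real.sqrt ((n:ℝ)+1) * (15*(n:ℝ)-2)
      = Real.sqrt (((2*(n:ℝ)+1)*(15*(n:ℝ)-2))^2 * ((n:ℝ)+1)) := by
        rw [Real.sqrt_mul (by positivity), Real.sqrt_sq hA]; ring
    _ ≤ Real.sqrt ((2*(n:ℝ)*(15*(n:ℝ)+13))^2 * (n:ℝ)) := hsq
    _ = 2*(n:ℝ)*(15*(n:ℝ)+13) * Real.sqrt n := by
        rw [Real.sqrt_mul (by positivity), Real.sqrt_sq hB]

lemma C_anti : ∀ n, 1 ≤ n → C (n+1) ≤ C n := by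
  intro n hn
  have h1 : (1:ℝ) ≤ (n:ℝ) := by exact_mod_cast hn
  have hcR : ((n:ℝ)+1) * (Nat.centralBinom (n+1) : ℝ) = 2*(2*(n:ℝ)+1) * Nat.centralBinom n := by
    exact_mod_cast Nat.succ_mul_centralBinom_succ n
  have hcb : (0:ℝ) ≤ Nat.centralBinom n := Nat.cast_nonneg _
  have hd1 : 1 - 2 / (15 * ((n:ℝ)+1)) = (15*(n:ℝ)+13)/(15*((n:ℝ)+1)) := by
    field_simp; ring
  have hd0 : 1 - 2 / (15 * (n:ℝ)) = (15*(n:ℝ)-2)/(15*(n:ℝ)) := by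
    field_simp
  have hcb1 : (Nat.centralBinom (n+1):ℝ) = 2*(2*(n:ℝ)+1) * (Nat.centralBinom n:ℝ) / ((n:ℝ)+1) := by
    field_simp
    linarith [hcR]
  have hmain : B (n+1) * (15*((n:ℝ)+1)) * (15*(n:ℝ)-2) ≤ B n * (15*(n:ℝ)) * (15*(n:ℝ)+13) := by
    rw [B, B, pow_succ, hcb1]
    push_cast
    have hk := mul_le_mul_of_nonneg_right (key2 n hn)
      (show (0:ℝ) ≤ (Nat.centralBinom n:ℝ) * 4^n * 15 by positivity)
    have hne : ((n:ℝ)+1) ≠ 0 := by positivity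
    have hne4 : ((4:ℝ)^n) ≠ 0 := by positivity
    field_simp
    nlinarith [mul_le_mul_of_nonneg_right hk (show (0:ℝ) ≤ (n:ℝ)+1 by positivity),
      mul_le_mul_of_nonneg_right (key2 n hn) (show (0:ℝ) ≤ (Nat.centralBinom n:ℝ) * 2 by positivity)]
  rw [C, C]
  push_cast
  rw [hd1, hd0, div_div_eq_mul_div, div_div_eq_mul_div,
    div_le_div_iff₀ (by positivity) (by nlinarith)]
  nlinarith [hmain]

theorem central_binom_bounds (n : ℕ) (hn : 1 ≤ n) :
    ((2 : ℝ) ^ (2 * n) / Real.sqrt (Real.pi * n)) * (1 - 2 / (15 * n))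
        ≤ (Nat.choose (2 * n) n : ℝ) ∧
      (Nat.choose (2 * n) n : ℝ) ≤ (2 : ℝ) ^ (2 * n) / Real.sqrt (Real.pi * n) := by
  have hn1 : (1:ℝ) ≤ n := by exact_mod_cast hn
  have hp : (0:ℝ) < Real.sqrt Real.pi := Real.sqrt_pos.mpr Real.pi_pos
  have hs : (0:ℝ) < Real.sqrt n := Real.sqrt_pos.mpr (by linarith)
  have h4 : (0:ℝ) < 4^n := by positivity
  have e : (Real.sqrt Real.pi)⁻¹ * Real.sqrt Real.pi = 1 := inv_mul_cancel₀ hp.ne'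
  have hch : ((2*n).choose n : ℝ) = (Nat.centralBinom n : ℝ) := by rw [Nat.centralBinom]
  have hsn : Real.sqrt (Real.pi * n) = Real.sqrt Real.pi * Real.sqrt n :=
    Real.sqrt_mul Real.pi_pos.le n
  have h2 : (2:ℝ)^(2*n) = 4^n := by rw [pow_mul]; norm_num
  have hd : (0:ℝ) < 1 - 2/(15*(n:ℝ)) := by
    have : (2:ℝ)/(15*(n:ℝ)) ≤ 2/15 := by
      rw [div_le_div_iff₀ (by positivity) (by norm_num)]; nlinarith
    linarith
  have hub := B_mono.ge_of_tendsto B_tendsto n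
  have hlb : (Real.sqrt Real.pi)⁻¹ ≤ C n := by
    have anti : Antitone (fun k => C (k+1)) :=
      antitone_nat_of_succ_le (fun k => C_anti (k+1) (by omega))
    have ht : Tendsto (fun k => C (k+1)) atTop (𝓝 ((Real.sqrt Real.pi)⁻¹)) :=
      C_tendsto.comp (tendsto_add_atTop_nat 1)
    have := anti.le_of_tendsto ht (n-1)
    simpa [Nat.sub_add_cancel hn] using this
  constructor
  · rw [hch, hsn, h2]
    rw [C, le_div_iff₀ hd] at hlb
    rw [B, le_div_iff₀ h4] at hlb
    have h5 := mul_le_mul_of_nonneg_right hlb hp.le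
    have h6 : (1 - 2/(15*(n:ℝ))) * 4^n ≤ (Nat.centralBinom n:ℝ) * Real.sqrt n * Real.sqrt Real.pi := by
      calc (1 - 2/(15*(n:ℝ))) * 4^n
          = (Real.sqrt Real.pi)⁻¹ * (1 - 2/(15*(n:ℝ))) * 4^n * Real.sqrt Real.pi := by
            rw [show (Real.sqrt Real.pi)⁻¹ * (1 - 2/(15*(n:ℝ))) * 4^n * Real.sqrt Real.pi
              = (1 - 2/(15*(n:ℝ))) * 4^n * ((Real.sqrt Real.pi)⁻¹ * Real.sqrt Real.pi) by ring, e,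
              mul_one]
        _ ≤ _ := h5
    rw [div_mul_eq_mul_div, div_le_iff₀ (by positivity)]
    push_cast
    nlinarith [h6]
  · rw [hch, hsn, h2, le_div_iff₀ (by positivity)]
    rw [B, div_le_iff₀ h4] at hub
    have h5 := mul_le_mul_of_nonneg_right hub hp.le
    have h6 : (Nat.centralBinom n:ℝ) * Real.sqrt n * Real.sqrt Real.pi ≤ 4^n := by
      calc (Nat.centralBinom n:ℝ) * Real.sqrt n * Real.sqrt Real.pi
          ≤ (Real.sqrt Real.pi)⁻¹ * 4^n * Real.sqrt Real.pi := h5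
        _ = 4^n := by
            rw [show (Real.sqrt Real.pi)⁻¹ * 4^n * Real.sqrt Real.pi
              = 4^n * ((Real.sqrt Real.pi)⁻¹ * Real.sqrt Real.pi) by ring, e, mul_one]
    nlinarith [h6]
end
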